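/- Suppose each conjugate ℓ*_i is L-Lipschitz continuous on ℝ. Let α ∈ ℝ^n with Σ_{i=1}^n ℓ_i(α_i) < ∞, and let u ∈ ℝ^n satisfy u_i ∈ ∂ℓ*_i(−x_i^T w(α)) for every i. Then Σ_{k=1}^K ‖A(u − α)_[k]‖² ≤ 4L² Σ_{k=1}^K σ_k |P_k|, where σ_k := sup{ ‖Aβ‖²/‖β‖² : β ∈ ℝ^n, β ≠ 0, β supported on P_k }. -/

import Mathlib

open scoped BigOperators

noncomputable section

namespace ProxCoCoA

/-- Euclidean dot product on `Fin m → ℝ`. -/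
def dotp {m : ℕ} (u v : Fin m → ℝ) : ℝ := ∑ j, u j * v j

/-- Squared Euclidean norm on `Fin m → ℝ`. -/
def sqnorm {m : ℕ} (u : Fin m → ℝ) : ℝ := ∑ j, (u j) ^ 2

/-- The `i`-th column `x_i` of the data matrix `A`. -/
def col {d n : ℕ} (A : Matrix (Fin d) (Fin n) ℝ) (i : Fin n) : Fin d → ℝ := fun j => A j i

/-- The restriction `β_[k]` of a vector to block `k` of the partition given by `part`. -/
def restr {n K : ℕ} (part : Fin n → Fin K) (k : Fin K) (β : Fin n → ℝ) : Fin n → ℝ :=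
  fun i => if part i = k then β i else 0

/-- The block `P_k` of the partition, as a finset. -/
def block {n K : ℕ} (part : Fin n → Fin K) (k : Fin K) : Finset (Fin n) :=
  Finset.univ.filter (fun i => part i = k)

/-- A vector is supported on block `P_k`. -/
def supportedOn {n K : ℕ} (part : Fin n → Fin K) (k : Fin K) (β : Fin n → ℝ) : Prop :=
  ∀ i, part i ≠ k → β i = 0

/-- σ_k := sup { ‖Aβ‖²/‖β‖² : β ≠ 0 supported on P_k }. -/
def sigmaBlock {d n K : ℕ} (A : Matrix (Fin d) (Fin n) ℝ) (part : Fin n → Fin K)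
    (k : Fin K) : ℝ :=
  sSup {r : ℝ | ∃ β : Fin n → ℝ, β ≠ 0 ∧ supportedOn part k β ∧
    r = sqnorm (A.mulVec β) / sqnorm β}

/-- The primal objective `D(α) = f(Aα) + Σᵢ ℓᵢ(αᵢ)`, extended-real valued. -/
def Dobj {d n : ℕ} (f : (Fin d → ℝ) → ℝ) (A : Matrix (Fin d) (Fin n) ℝ)
    (ℓ : Fin n → ℝ → EReal) (α : Fin n → ℝ) : EReal :=
  (f (A.mulVec α) : EReal) + ∑ i, ℓ i (α i)

/-- The local subproblem objective
`G_k^{σ'}(Δ; v, α) = f(v)/K + ∇f(v)ᵀ A Δ + σ'/(2τ) ‖AΔ‖² + Σ_{i ∈ P_k} ℓᵢ(αᵢ + Δᵢ)`. -/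
def Gk {d n K : ℕ} (f : (Fin d → ℝ) → ℝ) (f' : (Fin d → ℝ) → Fin d → ℝ)
    (A : Matrix (Fin d) (Fin n) ℝ) (ℓ : Fin n → ℝ → EReal) (part : Fin n → Fin K)
    (τ σ' : ℝ) (k : Fin K) (v : Fin d → ℝ) (α Δ : Fin n → ℝ) : EReal :=
  ((f v / K + dotp (f' v) (A.mulVec Δ) + σ' / (2 * τ) * sqnorm (A.mulVec Δ) : ℝ) : EReal)
    + ∑ i ∈ block part k, ℓ i (α i + Δ i)

/-- Fenchel conjugate of a scalar extended-real-valued function. -/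
def conj (g : ℝ → EReal) (z : ℝ) : EReal := ⨆ a : ℝ, ((z * a : ℝ) : EReal) - g a

/-- Fenchel conjugate of the (real-valued) smooth part `f`. -/
def fconj {d : ℕ} (f : (Fin d → ℝ) → ℝ) (w : Fin d → ℝ) : EReal :=
  ⨆ v : Fin d → ℝ, ((dotp w v - f v : ℝ) : EReal)

/-- The dual objective `P(w) = f*(w) + Σᵢ ℓᵢ*(-xᵢᵀ w)`. -/
def Pobj {d n : ℕ} (f : (Fin d → ℝ) → ℝ) (A : Matrix (Fin d) (Fin n) ℝ)
    (ℓ : Fin n → ℝ → EReal) (w : Fin d → ℝ) : EReal :=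
  fconj f w + ∑ i, conj (ℓ i) (-(dotp (col A i) w))

/-- The duality gap `G(α) = P(w(α)) + D(α)`, with `w(α) = ∇f(Aα)`. -/
def gap {d n : ℕ} (f : (Fin d → ℝ) → ℝ) (f' : (Fin d → ℝ) → Fin d → ℝ)
    (A : Matrix (Fin d) (Fin n) ℝ) (ℓ : Fin n → ℝ → EReal) (α : Fin n → ℝ) : EReal :=
  Pobj f A ℓ (f' (A.mulVec α)) + Dobj f A ℓ α

/-- `u ∈ ∂g*(z)`: `u` is a subgradient of the conjugate of `g` at `z`. -/
def IsConjSubgradient (g : ℝ → EReal) (z u : ℝ) : Prop :=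
  ∀ y : ℝ, conj g z + ((u * (y - z) : ℝ) : EReal) ≤ conj g y

/-- `g` is proper: never `-∞`, finite somewhere. -/
def ProperFn (g : ℝ → EReal) : Prop := (∀ a, g a ≠ ⊥) ∧ ∃ a, g a ≠ ⊤

/-- `μ`-strong convexity of an extended-real-valued function (`μ = 0` is plain convexity). -/
def StronglyConvexFn (μ : ℝ) (g : ℝ → EReal) : Prop :=
  ∀ a b t : ℝ, 0 ≤ t → t ≤ 1 →
    g (t * a + (1 - t) * b) + ((μ / 2 * t * (1 - t) * (a - b) ^ 2 : ℝ) : EReal)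
      ≤ (t : EReal) * g a + ((1 - t : ℝ) : EReal) * g b

/-- `f'` is a gradient certifying convexity of `f` (first-order lower bound). -/
def ConvexWithGrad {d : ℕ} (f : (Fin d → ℝ) → ℝ) (f' : (Fin d → ℝ) → Fin d → ℝ) : Prop :=
  ∀ u v : Fin d → ℝ, f v + dotp (f' v) (u - v) ≤ f u

/-- `f` is `(1/τ)`-smooth with gradient `f'` (first-order quadratic upper bound). -/
def SmoothWithGrad {d : ℕ} (τ : ℝ) (f : (Fin d → ℝ) → ℝ)
    (f' : (Fin d → ℝ) → Fin d → ℝ) : Prop :=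
  ∀ u v : Fin d → ℝ, f u ≤ f v + dotp (f' v) (u - v) + 1 / (2 * τ) * sqnorm (u - v)

/-- `Δ` is a `Θ`-approximate solution of the `k`-th local subproblem at `(v, α)`. -/
def ThetaApprox {d n K : ℕ} (f : (Fin d → ℝ) → ℝ) (f' : (Fin d → ℝ) → Fin d → ℝ)
    (A : Matrix (Fin d) (Fin n) ℝ) (ℓ : Fin n → ℝ → EReal) (part : Fin n → Fin K)
    (τ σ' Θ : ℝ) (k : Fin K) (v : Fin d → ℝ) (α Δ : Fin n → ℝ) : Prop :=
  supportedOn part k Δ ∧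
    ∃ Δs : Fin n → ℝ, supportedOn part k Δs ∧
      (∀ Δ' : Fin n → ℝ, supportedOn part k Δ' →
        Gk f f' A ℓ part τ σ' k v α Δs ≤ Gk f f' A ℓ part τ σ' k v α Δ') ∧
      Gk f f' A ℓ part τ σ' k v α Δ - Gk f f' A ℓ part τ σ' k v α Δs
        ≤ (Θ : EReal) * (Gk f f' A ℓ part τ σ' k v α 0 - Gk f f' A ℓ part τ σ' k v α Δs)


/-! ### Auxiliary lemmas -/

lemma sum_ne_bot' {ι : Type*} (s : Finset ι) (g : ι → EReal)
    (h : ∀ i ∈ s, g i ≠ ⊥) : ∑ i ∈ s, g i ≠ ⊥ := by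
  classical
  induction s using Finset.induction_on with
  | empty => simp
  | @insert a s' ha ih =>
    rw [Finset.sum_insert ha]
    simp only [ne_eq, EReal.add_eq_bot_iff, not_or]
    exact ⟨h a (Finset.mem_insert_self a s'),
      ih fun i hi => h i (Finset.mem_insert_of_mem hi)⟩

lemma lsc_lower_bound (g : ℝ → EReal) (hb : ∀ a, g a ≠ ⊥)
    (hlsc : LowerSemicontinuous g) (l r : ℝ) :
    ∃ m : ℝ, ∀ x ∈ Set.Icc l r, ((m : ℝ) : EReal) ≤ g x := by
  have hcov : Set.Icc l r ⊆ ⋃ n : ℕ, g ⁻¹' Set.Ioi ((-(n : ℝ) : ℝ) : EReal) := by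
    intro x _
    simp only [Set.mem_iUnion, Set.mem_preimage, Set.mem_Ioi]
    rcases eq_or_ne (g x) ⊤ with h | h
    · exact ⟨0, by simp [h]⟩
    · obtain ⟨n, hn⟩ := exists_nat_gt (-(g x).toReal)
      refine ⟨n, ?_⟩
      have h2 : ((-(n : ℝ) : ℝ) : EReal) < (((g x).toReal : ℝ) : EReal) :=
        EReal.coe_lt_coe_iff.mpr (by linarith)
      rwa [EReal.coe_toReal h (hb x)] at h2
  obtain ⟨t, ht⟩ := isCompact_Icc.elim_finite_subcover _
    (fun n => hlsc.isOpen_preimage _) hcov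
  refine ⟨-((t.sup id : ℕ) : ℝ), fun x hx => ?_⟩
  obtain ⟨n, hn, hxn⟩ := Set.mem_iUnion₂.1 (ht hx)
  have hle : (n : ℝ) ≤ ((t.sup id : ℕ) : ℝ) := by
    exact_mod_cast Finset.le_sup (f := id) hn
  have h1 : ((-((t.sup id : ℕ) : ℝ) : ℝ) : EReal) ≤ ((-(n : ℝ) : ℝ) : EReal) :=
    EReal.coe_le_coe_iff.mpr (by linarith)
  exact h1.trans (le_of_lt hxn)

lemma cvx_combo (g : ℝ → EReal) (hcv : StronglyConvexFn 0 g) {a b va vb : ℝ}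
    (ha : g a = (va : EReal)) (hbv : g b = (vb : EReal)) {t : ℝ}
    (h0 : 0 ≤ t) (h1 : t ≤ 1) :
    g (t * a + (1 - t) * b) ≤ ((t * va + (1 - t) * vb : ℝ) : EReal) := by
  have h := hcv a b t h0 h1
  rw [ha, hbv] at h
  have hz : ((0 / 2 * t * (1 - t) * (a - b) ^ 2 : ℝ) : EReal) = 0 := by norm_num
  rw [hz, add_zero] at h
  calc g (t * a + (1 - t) * b)
      ≤ (t : EReal) * (va : EReal) + ((1 - t : ℝ) : EReal) * (vb : EReal) := h
    _ = ((t * va + (1 - t) * vb : ℝ) : EReal) := by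
        rw [← EReal.coe_mul, ← EReal.coe_mul, ← EReal.coe_add]

lemma exists_affine_minorant (g : ℝ → EReal) (hb : ∀ a, g a ≠ ⊥)
    (hlsc : LowerSemicontinuous g) (hcv : StronglyConvexFn 0 g)
    (p : ℝ) (hp : g p ≠ ⊤) :
    ∃ s C : ℝ, ∀ a : ℝ, ((s * a - C : ℝ) : EReal) ≤ g a := by
  by_cases hq : ∀ a, a ≠ p → g a = ⊤
  · refine ⟨0, -(g p).toReal, fun a => ?_⟩
    by_cases hap : a = p
    · subst hap
      have hgp : g a = (((g a).toReal : ℝ) : EReal) := (EReal.coe_toReal hp (hb a)).symm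
      rw [hgp]
      exact EReal.coe_le_coe_iff.mpr (by norm_num)
    · rw [hq a hap]; exact le_top
  · push_neg at hq
    obtain ⟨q, hqp, hgq⟩ := hq
    set l := min p q with hldef
    set r := max p q with hrdef
    have hlr : l < r := min_lt_max.mpr (Ne.symm hqp)
    have hrl : (0 : ℝ) < r - l := by linarith
    have hgl : g l ≠ ⊤ := by
      rcases min_choice p q with h | h <;> rw [hldef, h]
      exacts [hp, hgq]
    have hgr : g r ≠ ⊤ := by
      rcases max_choice p q with h | h <;> rw [hrdef, h]
      exacts [hp, hgq]
    set cl := (g l).toReal with hcldef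
    set cr := (g r).toReal with hcrdef
    have hcl : g l = ((cl : ℝ) : EReal) := (EReal.coe_toReal hgl (hb l)).symm
    have hcr : g r = ((cr : ℝ) : EReal) := (EReal.coe_toReal hgr (hb r)).symm
    set s := (cr - cl) / (r - l) with hsdef
    have hkey : s * (r - l) = cr - cl := div_mul_cancel₀ _ hrl.ne'
    obtain ⟨m, hm⟩ := lsc_lower_bound g hb hlsc l r
    refine ⟨s, max (s * l - cl) (max (s * l - m) (s * r - m)), fun x => ?_⟩
    set C := max (s * l - cl) (max (s * l - m) (s * r - m)) with hCdef
    have hC1 : s * l - cl ≤ C := le_max_left _ _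
    rcases lt_or_ge x l with hxl | hxl
    · -- x < l
      by_cases hgx : g x = ⊤
      · rw [hgx]; exact le_top
      set v := (g x).toReal with hvdef
      have hvx : g x = ((v : ℝ) : EReal) := (EReal.coe_toReal hgx (hb x)).symm
      rw [hvx]
      refine EReal.coe_le_coe_iff.mpr ?_
      have hrx : (0 : ℝ) < r - x := by linarith
      set t := (r - l) / (r - x) with htdef
      have h0 : 0 ≤ t := div_nonneg hrl.le hrx.le
      have h1 : t ≤ 1 := by rw [div_le_one hrx]; linarith
      have ht : t * (r - x) = r - l := div_mul_cancel₀ _ hrx.ne'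
      have hpt : t * x + (1 - t) * r = l := by
        linear_combination -ht
      have hcomb := cvx_combo g hcv hvx hcr h0 h1
      rw [hpt, hcl] at hcomb
      have hineq : cl ≤ t * v + (1 - t) * cr := EReal.coe_le_coe_iff.mp hcomb
      have h2 : cl * (r - x) ≤ (t * v + (1 - t) * cr) * (r - x) :=
        mul_le_mul_of_nonneg_right hineq hrx.le
      have h3 : (t * v + (1 - t) * cr) * (r - x) = (r - l) * v + (l - x) * cr := by
        linear_combination (v - cr) * ht
      have h4 : cl * (r - x) ≤ (r - l) * v + (l - x) * cr := h3 ▸ h2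
      have h5' : s * (x - l) * (r - l) = (cr - cl) * (x - l) := by
        linear_combination (x - l) * hkey
      have h5 : (cl + s * (x - l)) * (r - l) ≤ v * (r - l) := by nlinarith [h4, h5']
      have h6 : cl + s * (x - l) ≤ v := le_of_mul_le_mul_right (by linarith) hrl
      have hexp : s * (x - l) = s * x - s * l := by ring
      linarith
    · rcases le_or_gt x r with hxr | hxr
      · -- l ≤ x ≤ r
        have hmx := hm x ⟨hxl, hxr⟩
        have hreal : s * x - C ≤ m := by
          rcases le_total s 0 with hs0 | hs0
          · have hsx : s * x ≤ s * l := mul_le_mul_of_nonpos_left hxl hs0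
            have hC2 : s * l - m ≤ C := le_trans (le_max_left _ _) (le_max_right _ _)
            linarith
          · have hsx : s * x ≤ s * r := mul_le_mul_of_nonneg_left hxr hs0
            have hC2 : s * r - m ≤ C := le_trans (le_max_right _ _) (le_max_right _ _)
            linarith
        exact le_trans (EReal.coe_le_coe_iff.mpr hreal) hmx
      · -- r < x
        by_cases hgx : g x = ⊤
        · rw [hgx]; exact le_top
        set v := (g x).toReal with hvdef
        have hvx : g x = ((v : ℝ) : EReal) := (EReal.coe_toReal hgx (hb x)).symm
        rw [hvx]
        refine EReal.coe_le_coe_iff.mpr ?_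
        have hxl' : (0 : ℝ) < x - l := by linarith
        set t := (x - r) / (x - l) with htdef
        have h0 : 0 ≤ t := div_nonneg (by linarith) hxl'.le
        have h1 : t ≤ 1 := by rw [div_le_one hxl']; linarith
        have ht : t * (x - l) = x - r := div_mul_cancel₀ _ hxl'.ne'
        have hpt : t * l + (1 - t) * x = r := by
          linear_combination -ht
        have hcomb := cvx_combo g hcv hcl hvx h0 h1
        rw [hpt, hcr] at hcomb
        have hineq : cr ≤ t * cl + (1 - t) * v := EReal.coe_le_coe_iff.mp hcomb
        have h2 : cr * (x - l) ≤ (t * cl + (1 - t) * v) * (x - l) :=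
          mul_le_mul_of_nonneg_right hineq hxl'.le
        have h3 : (t * cl + (1 - t) * v) * (x - l) = (x - r) * cl + (r - l) * v := by
          linear_combination (cl - v) * ht
        have h4 : cr * (x - l) ≤ (x - r) * cl + (r - l) * v := h3 ▸ h2
        have h5' : s * (x - l) * (r - l) = (cr - cl) * (x - l) := by
          linear_combination (x - l) * hkey
        have h5 : (cl + s * (x - l)) * (r - l) ≤ v * (r - l) := by nlinarith [h4, h5']
        have h6 : cl + s * (x - l) ≤ v := le_of_mul_le_mul_right (by linarith) hrl
        have hexp : s * (x - l) = s * x - s * l := by ring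
        linarith

lemma bounds_from_lipschitz (g : ℝ → EReal) (hb : ∀ a, g a ≠ ⊥)
    (hlsc : LowerSemicontinuous g) (hcv : StronglyConvexFn 0 g)
    (L : ℝ) (hLip : ∀ x y : ℝ, conj g x ≤ conj g y + ((L * |x - y| : ℝ) : EReal))
    (p : ℝ) (hp : g p ≠ ⊤) (z0 u0 : ℝ) (hu : IsConjSubgradient g z0 u0) :
    |p| ≤ L ∧ |u0| ≤ L := by
  obtain ⟨s, C, hmin⟩ := exists_affine_minorant g hb hlsc hcv p hp
  set cp := (g p).toReal with hcpdef
  have hgp : g p = ((cp : ℝ) : EReal) := (EReal.coe_toReal hp (hb p)).symm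
  have hconj_s_le : conj g s ≤ (C : EReal) := by
    simp only [conj]
    refine iSup_le fun a => ?_
    rcases eq_or_ne (g a) ⊤ with h | h
    · rw [h, EReal.sub_top]; exact bot_le
    · have hva : g a = (((g a).toReal : ℝ) : EReal) := (EReal.coe_toReal h (hb a)).symm
      have h1 := hmin a
      rw [hva] at h1 ⊢
      rw [← EReal.coe_sub]
      have h2 : s * a - C ≤ (g a).toReal := EReal.coe_le_coe_iff.mp h1
      exact EReal.coe_le_coe_iff.mpr (by linarith)
  have hne_top : ∀ z, conj g z ≠ ⊤ := by
    intro z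
    have h1 := hLip z s
    have h2 : conj g s + ((L * |z - s| : ℝ) : EReal)
        ≤ (C : EReal) + ((L * |z - s| : ℝ) : EReal) := add_le_add_left hconj_s_le _
    have h3 : conj g z ≤ ((C + L * |z - s| : ℝ) : EReal) := by
      rw [EReal.coe_add]; exact h1.trans h2
    exact ne_top_of_le_ne_top (EReal.coe_ne_top _) h3
  have hFY : ∀ z : ℝ, ((z * p - cp : ℝ) : EReal) ≤ conj g z := by
    intro z
    have h := le_iSup (fun a => ((z * a : ℝ) : EReal) - g a) p
    simp only [conj]
    calc ((z * p - cp : ℝ) : EReal) = ((z * p : ℝ) : EReal) - g p := by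
          rw [EReal.coe_sub, hgp]
      _ ≤ _ := h
  have hne_bot : ∀ z, conj g z ≠ ⊥ :=
    fun z => ((EReal.bot_lt_coe _).trans_le (hFY z)).ne'
  set c : ℝ → ℝ := fun z => (conj g z).toReal with hcdef
  have hc : ∀ z, conj g z = ((c z : ℝ) : EReal) :=
    fun z => (EReal.coe_toReal (hne_top z) (hne_bot z)).symm
  have hLipR : ∀ x y : ℝ, c x ≤ c y + L * |x - y| := by
    intro x y
    have h := hLip x y
    rw [hc x, hc y, ← EReal.coe_add] at h
    exact_mod_cast h
  have hFYR : ∀ z : ℝ, z * p - cp ≤ c z := by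
    intro z
    have h := hFY z
    rw [hc z] at h
    exact_mod_cast h
  constructor
  · -- |p| ≤ L
    by_contra hcon
    push_neg at hcon
    set D := cp + c 0 with hDdef
    have hz : ∀ t : ℝ, 0 < t → t * |p| ≤ D + L * t := by
      intro t htpos
      rcases le_total 0 p with hp0 | hp0
      · have h1 := hFYR t
        have h2 := hLipR t 0
        rw [abs_of_nonneg hp0]
        have h3 : |t - 0| = t := by rw [sub_zero, abs_of_pos htpos]
        rw [h3] at h2
        nlinarith
      · have h1 := hFYR (-t)
        have h2 := hLipR (-t) 0
        rw [abs_of_nonpos hp0]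
        have h3 : |(-t) - 0| = t := by rw [sub_zero, abs_of_neg (by linarith)]; ring
        rw [h3] at h2
        nlinarith
    set t := (|D| + 1) / (|p| - L) with htdef
    have hden : (0 : ℝ) < |p| - L := by linarith
    have htpos : 0 < t := div_pos (by positivity) hden
    have ht2 : t * (|p| - L) = |D| + 1 := div_mul_cancel₀ _ hden.ne'
    have := hz t htpos
    nlinarith [le_abs_self D]
  · -- |u0| ≤ L
    have key : ∀ y : ℝ, u0 * (y - z0) ≤ L * |y - z0| := by
      intro y
      have h1 := hu y
      have h2 := hLipR y z0
      rw [hc z0, hc y, ← EReal.coe_add] at h1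
      have h1' : c z0 + u0 * (y - z0) ≤ c y := by exact_mod_cast h1
      linarith
    have ha : u0 ≤ L := by
      have h := key (z0 + 1)
      simp only [add_sub_cancel_left] at h
      simpa using h
    have hb2 : -u0 ≤ L := by
      have h := key (z0 - 1)
      have h3 : z0 - 1 - z0 = -1 := by ring
      rw [h3] at h
      simp at h
      linarith
    exact abs_le.mpr ⟨by linarith, ha⟩

lemma sqnorm_pos_of_ne_zero {m : ℕ} {v : Fin m → ℝ} (h : v ≠ 0) : 0 < sqnorm v := by
  have hex : ∃ i, v i ≠ 0 := by
    by_contra hc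
    push_neg at hc
    exact h (funext fun i => hc i)
  obtain ⟨i, hi⟩ := hex
  have h1 : v i ^ 2 ≠ 0 := pow_ne_zero 2 hi
  have h2 : (0 : ℝ) < v i ^ 2 := (sq_nonneg _).lt_of_ne (Ne.symm h1)
  exact lt_of_lt_of_le h2
    (Finset.single_le_sum (fun j _ => sq_nonneg (v j)) (Finset.mem_univ i))

lemma sqnorm_nonneg {m : ℕ} (v : Fin m → ℝ) : 0 ≤ sqnorm v :=
  Finset.sum_nonneg fun _ _ => sq_nonneg _

/-- Lemma 6 of the paper, deterministic form: if the conjugates `ℓᵢ*`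
are `L`-Lipschitz on ℝ, the error term is bounded by `4L² Σ_k σ_k |P_k|`. -/
theorem error_term_bound {d n K : ℕ}
    (A : Matrix (Fin d) (Fin n) ℝ) (part : Fin n → Fin K)
    (f : (Fin d → ℝ) → ℝ) (f' : (Fin d → ℝ) → Fin d → ℝ)
    (hfconv : ConvexWithGrad f f')
    (ℓ : Fin n → ℝ → EReal)
    (hℓproper : ∀ i, ProperFn (ℓ i)) (hℓlsc : ∀ i, LowerSemicontinuous (ℓ i))
    (hℓconv : ∀ i, StronglyConvexFn 0 (ℓ i))
    (L : ℝ)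
    (hLip : ∀ i, ∀ x y : ℝ, conj (ℓ i) x ≤ conj (ℓ i) y + ((L * |x - y| : ℝ) : EReal))
    (α : Fin n → ℝ) (hα : (∑ i, ℓ i (α i)) < ⊤)
    (u : Fin n → ℝ)
    (hu : ∀ i, IsConjSubgradient (ℓ i) (-(dotp (col A i) (f' (A.mulVec α)))) (u i)) :
    ∑ k, sqnorm (A.mulVec (restr part k (u - α)))
      ≤ 4 * L ^ 2 * ∑ k, sigmaBlock A part k * (block part k).card := by
  classical
  -- each ℓ i (α i) is finite
  have hℓtop : ∀ i, ℓ i (α i) ≠ ⊤ := by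
    intro i hi
    have hrest : ∑ j ∈ Finset.univ.erase i, ℓ j (α j) ≠ ⊥ :=
      sum_ne_bot' _ _ (fun j _ => (hℓproper j).1 (α j))
    have htot : ∑ j, ℓ j (α j) = ⊤ := by
      rw [← Finset.add_sum_erase _ _ (Finset.mem_univ i), hi,
        EReal.top_add_of_ne_bot hrest]
    rw [htot] at hα
    exact lt_irrefl _ hα
  -- coordinatewise bound
  have hbound : ∀ i, |u i - α i| ≤ 2 * L := by
    intro i
    obtain ⟨hpL, huL⟩ := bounds_from_lipschitz (ℓ i) ((hℓproper i).1) (hℓlsc i)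
      (hℓconv i) L (hLip i) (α i) (hℓtop i) _ (u i) (hu i)
    have h1 := abs_le.mp hpL
    have h2 := abs_le.mp huL
    exact abs_le.mpr ⟨by linarith, by linarith⟩
  -- blockwise bound
  have hk : ∀ k, sqnorm (A.mulVec (restr part k (u - α)))
      ≤ 4 * L ^ 2 * (sigmaBlock A part k * (block part k).card) := by
    intro k
    set β := restr part k (u - α) with hβdef
    have hsupp : supportedOn part k β := by
      intro i hi
      simp [hβdef, restr, hi]
    set S := {r : ℝ | ∃ β' : Fin n → ℝ, β' ≠ 0 ∧ supportedOn part k β' ∧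
      r = sqnorm (A.mulVec β') / sqnorm β'} with hSdef
    have hσS : sigmaBlock A part k = sSup S := rfl
    have hS_bdd : BddAbove S := by
      refine ⟨∑ j, ∑ i, (A j i) ^ 2, fun r hr => ?_⟩
      obtain ⟨γ, hγ0, -, rfl⟩ := hr
      have hγpos : 0 < sqnorm γ := sqnorm_pos_of_ne_zero hγ0
      rw [div_le_iff₀ hγpos]
      calc sqnorm (A.mulVec γ) = ∑ j, (∑ i, A j i * γ i) ^ 2 := by
            simp [sqnorm, Matrix.mulVec, dotProduct]
        _ ≤ ∑ j : Fin d, (∑ i, (A j i) ^ 2) * (∑ i, γ i ^ 2) :=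
            Finset.sum_le_sum fun j _ => Finset.sum_mul_sq_le_sq_mul_sq _ _ _
        _ = (∑ j, ∑ i, (A j i) ^ 2) * sqnorm γ := by
            rw [← Finset.sum_mul]; rfl
    -- sqnorm β ≤ 4 L² |P_k|
    have hsqβ : sqnorm β ≤ 4 * L ^ 2 * (block part k).card := by
      have hterm : ∀ i, β i ^ 2 ≤ (if part i = k then (2 * L) ^ 2 else 0) := by
        intro i
        by_cases hik : part i = k
        · simp only [hβdef, restr, hik, if_true, Pi.sub_apply]
          have h1 := hbound i
          nlinarith [abs_nonneg (u i - α i), sq_abs (u i - α i)]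
        · simp [hβdef, restr, hik]
      have hsum : (∑ i, (if part i = k then (2 * L) ^ 2 else (0 : ℝ)))
          = (block part k).card * (2 * L) ^ 2 := by
        rw [Finset.sum_ite, Finset.sum_const, Finset.sum_const_zero, add_zero,
          nsmul_eq_mul]
        rfl
      have h2 : sqnorm β ≤ (block part k).card * (2 * L) ^ 2 := by
        calc sqnorm β = ∑ i, β i ^ 2 := rfl
          _ ≤ ∑ i, (if part i = k then (2 * L) ^ 2 else (0 : ℝ)) :=
              Finset.sum_le_sum fun i _ => hterm i
          _ = (block part k).card * (2 * L) ^ 2 := hsum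
      nlinarith [h2]
    by_cases hβ0 : β = 0
    · rw [hβ0]
      have hLHS : sqnorm (A.mulVec (0 : Fin n → ℝ)) = 0 := by
        simp [sqnorm, Matrix.mulVec_zero]
      rw [hLHS]
      by_cases hbk : (block part k).Nonempty
      · obtain ⟨i0, hi0⟩ := hbk
        have hi0k : part i0 = k := by simpa [block] using hi0
        set γ : Fin n → ℝ := fun i => if i = i0 then 1 else 0 with hγdef
        have hγ0 : γ ≠ 0 := by
          intro h
          have := congrFun h i0
          simp [hγdef] at this
        have hγs : supportedOn part k γ := by
          intro i hik
          have hii : i ≠ i0 := fun h => hik (h ▸ hi0k)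
          simp [hγdef, hii]
        have hmem : sqnorm (A.mulVec γ) / sqnorm γ ∈ S := ⟨γ, hγ0, hγs, rfl⟩
        have hr0 : 0 ≤ sqnorm (A.mulVec γ) / sqnorm γ :=
          div_nonneg (sqnorm_nonneg _) (sqnorm_nonneg _)
        have hσ : 0 ≤ sigmaBlock A part k := by
          rw [hσS]; exact le_trans hr0 (le_csSup hS_bdd hmem)
        have hcard : (0 : ℝ) ≤ ((block part k).card : ℝ) := Nat.cast_nonneg _
        exact mul_nonneg (by positivity) (mul_nonneg hσ hcard)
      · have hbe : block part k = ∅ := Finset.not_nonempty_iff_eq_empty.mp hbk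
        simp [hbe]
    · have hpos := sqnorm_pos_of_ne_zero hβ0
      set r := sqnorm (A.mulVec β) / sqnorm β with hrdef
      have hmem : r ∈ S := ⟨β, hβ0, hsupp, rfl⟩
      have hrσ : r ≤ sigmaBlock A part k := by
        rw [hσS]; exact le_csSup hS_bdd hmem
      have hr0 : 0 ≤ r := div_nonneg (sqnorm_nonneg _) (sqnorm_nonneg _)
      have heq : sqnorm (A.mulVec β) = r * sqnorm β :=
        (div_mul_cancel₀ _ hpos.ne').symm
      calc sqnorm (A.mulVec β) = r * sqnorm β := heq
        _ ≤ sigmaBlock A part k * sqnorm β :=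
            mul_le_mul_of_nonneg_right hrσ hpos.le
        _ ≤ sigmaBlock A part k * (4 * L ^ 2 * (block part k).card) :=
            mul_le_mul_of_nonneg_left hsqβ (le_trans hr0 hrσ)
        _ = 4 * L ^ 2 * (sigmaBlock A part k * (block part k).card) := by ring
  calc ∑ k, sqnorm (A.mulVec (restr part k (u - α)))
      ≤ ∑ k, 4 * L ^ 2 * (sigmaBlock A part k * (block part k).card) :=
        Finset.sum_le_sum fun k _ => hk k
    _ = 4 * L ^ 2 * ∑ k, sigmaBlock A part k * (block part k).card := by
        rw [Finset.mul_sum]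

end ProxCoCoA
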